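/- For any a, b ∈ ℂ, the 3-dimensional complex vector space V(a,b) = ℂL ⊕ ℂY ⊕ ℂM with bilinear product ∘ given by L∘L = L, L∘Y = (a−1)Y, Y∘L = Y, L∘M = (2a−3)M, M∘L = M, Y∘Y = M, Y∘M = M∘Y = M∘M = 0, M∘M = 0 (and all other products of basis vectors zero), and bilinear bracket [·,·] given by [L,Y] = −bY = −[Y,L], [L,M] = −2bM = −[M,L], and all other brackets of basis vectors zero, is a Gel'fand-Dorfman bialgebra: (V(a,b), ∘) is a Novikov algebra, (V(a,b), [·,·]) is a Lie algebra, and the compatibility condition holds. -/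
import Mathlib

/-!
Statement 4: for any a, b ∈ ℂ, the 3-dimensional space V(a,b) = ℂL ⊕ ℂY ⊕ ℂM
(coordinates indexed L = 0, Y = 1, M = 2) with the Novikov product
  L∘L = L, L∘Y = (a−1)Y, Y∘L = Y, L∘M = (2a−3)M, M∘L = M, Y∘Y = M,
  Y∘M = M∘Y = M∘M = 0 (all other products of basis vectors zero)
and the bracket [L,Y] = −bY, [L,M] = −2bM (all other brackets of basis vectors zero,
extended antisymmetrically and bilinearly) is a Gel'fand-Dorfman bialgebra.
-/

/-- The bilinear product ∘ of V(a,b) in coordinates. -/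
def nprod (a : ℂ) (x y : Fin 3 → ℂ) : Fin 3 → ℂ :=
  ![x 0 * y 0,
    (a - 1) * (x 0 * y 1) + x 1 * y 0,
    (2 * a - 3) * (x 0 * y 2) + x 2 * y 0 + x 1 * y 1]

/-- The bilinear bracket [·,·] of V(a,b) in coordinates. -/
def lbr (b : ℂ) (x y : Fin 3 → ℂ) : Fin 3 → ℂ :=
  ![0,
    -b * (x 0 * y 1 - x 1 * y 0),
    -(2 * b) * (x 0 * y 2 - x 2 * y 0)]

/-- (V(a,b), ∘, [·,·]) is a Gel'fand-Dorfman bialgebra: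
∘ is a Novikov product, [·,·] is a Lie bracket, and the compatibility
condition holds. -/
theorem Vab_gelfandDorfman (a b : ℂ) :
    (∀ x y z : Fin 3 → ℂ,
      nprod a (nprod a x y) z - nprod a x (nprod a y z)
        = nprod a (nprod a y x) z - nprod a y (nprod a x z)) ∧
    (∀ x y z : Fin 3 → ℂ, nprod a (nprod a x y) z = nprod a (nprod a x z) y) ∧
    (∀ x y : Fin 3 → ℂ, lbr b x y = - lbr b y x) ∧
    (∀ x y z : Fin 3 → ℂ,
      lbr b (lbr b x y) z + lbr b (lbr b y z) x + lbr b (lbr b z x) y = 0) ∧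
    (∀ x y z : Fin 3 → ℂ,
      lbr b (nprod a x y) z - lbr b (nprod a x z) y + nprod a (lbr b x y) z
        - nprod a (lbr b x z) y - nprod a x (lbr b y z) = 0) := by
  refine ⟨?_, ?_, ?_, ?_, ?_⟩ <;>
    intro x y <;>
    try intro z
  all_goals
    funext i <;>
    fin_cases i <;>
    simp [nprod, lbr] <;>
    ring
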